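/- Every Egorov space has recurrent Ricci tensor: ∇Ric = ω ⊗ Ric for a 1-form ω. Concretely, in the coordinate frame, ∇Ric = (n-2)·(((f')² - 2ff'')/(4f²))' · dx_n ⊗ dx_n ⊗ dx_n, which is a multiple of Ric = (n-2)·((f')² - 2ff'')/(4f²) · dx_n ⊗ dx_n wherever Ric ≠ 0. -/

import Mathlib

set_option maxRecDepth 10000

noncomputable section

/-- Partial derivative of a function on `ℝⁿ` in the `a`-th coordinate direction. -/
def pd {N : ℕ} (a : Fin N) (h : (Fin N → ℝ) → ℝ) (x : Fin N → ℝ) : ℝ :=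
  deriv (fun t => h (Function.update x a t)) (x a)

/-- The index of the coordinate `x_n` (dimension `n = m+3`). -/
def lastIdx (m : ℕ) : Fin (m + 3) := ⟨m + 2, by omega⟩

/-- The index of the coordinate `x_{n-1}`. -/
def penIdx (m : ℕ) : Fin (m + 3) := ⟨m + 1, by omega⟩

/-- The Egorov metric `g_f = f(x_n) Σ_{i=1}^{n-2} (dx_i)² + 2 dx_{n-1} dx_n` on `ℝⁿ`, `n = m+3`. -/
def gE (m : ℕ) (f : ℝ → ℝ) (x : Fin (m + 3) → ℝ) (i j : Fin (m + 3)) : ℝ :=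
  if i = j ∧ (i : ℕ) < m + 1 then f (x (lastIdx m))
  else if (i = penIdx m ∧ j = lastIdx m) ∨ (i = lastIdx m ∧ j = penIdx m) then 1
  else 0

/-- Christoffel symbols `Γ^k_{ij}` of the Egorov metric:
`∇_{∂_i}∂_i = -(f'/2)∂_{n-1}`, `∇_{∂_i}∂_n = (f'/(2f))∂_i` for spatial `i`, all others zero. -/
def ΓE (m : ℕ) (f : ℝ → ℝ) (x : Fin (m + 3) → ℝ) (k i j : Fin (m + 3)) : ℝ :=
  if (i : ℕ) < m + 1 ∧ j = i ∧ k = penIdx m then -(deriv f (x (lastIdx m)) / 2)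
  else if (i : ℕ) < m + 1 ∧ j = lastIdx m ∧ k = i then
    deriv f (x (lastIdx m)) / (2 * f (x (lastIdx m)))
  else if (j : ℕ) < m + 1 ∧ i = lastIdx m ∧ k = j then
    deriv f (x (lastIdx m)) / (2 * f (x (lastIdx m)))
  else 0

/-- Component on `∂_l` of `R(∂_i,∂_j)∂_k`, with the sign convention
`R(X,Y) = ∇_{[X,Y]} - [∇_X, ∇_Y]` (in coordinates `[∂_i,∂_j] = 0`). -/
def RopE (m : ℕ) (f : ℝ → ℝ) (x : Fin (m + 3) → ℝ) (i j k l : Fin (m + 3)) : ℝ :=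
  -(pd i (fun y => ΓE m f y l j k) x - pd j (fun y => ΓE m f y l i k) x
    + ∑ s, (ΓE m f x l i s * ΓE m f x s j k - ΓE m f x l j s * ΓE m f x s i k))

/-- The (0,4)-curvature tensor `R(∂_i,∂_j,∂_k,∂_h) = ⟨R(∂_i,∂_j)∂_k, ∂_h⟩`. -/
def R4E (m : ℕ) (f : ℝ → ℝ) (x : Fin (m + 3) → ℝ) (i j k h : Fin (m + 3)) : ℝ :=
  ∑ l, RopE m f x i j k l * gE m f x l h

/-- Ricci tensor `Ric(X,Y) = trace (Z ↦ R(X,Z)Y)`. -/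
def RicE (m : ℕ) (f : ℝ → ℝ) (x : Fin (m + 3) → ℝ) (i j : Fin (m + 3)) : ℝ :=
  ∑ k, RopE m f x i k j k

/-- Covariant derivative `(∇_{∂_a} R)(∂_i,∂_j,∂_k,∂_h)` of the (0,4)-curvature tensor. -/
def covR4E (m : ℕ) (f : ℝ → ℝ) (x : Fin (m + 3) → ℝ) (a i j k h : Fin (m + 3)) : ℝ :=
  pd a (fun y => R4E m f y i j k h) x
    - ∑ s, (ΓE m f x s a i * R4E m f x s j k h + ΓE m f x s a j * R4E m f x i s k h
      + ΓE m f x s a k * R4E m f x i j s h + ΓE m f x s a h * R4E m f x i j k s)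

/-- Covariant derivative `(∇_{∂_a} Ric)(∂_i,∂_j)` of the Ricci tensor. -/
def covRicE (m : ℕ) (f : ℝ → ℝ) (x : Fin (m + 3) → ℝ) (a i j : Fin (m + 3)) : ℝ :=
  pd a (fun y => RicE m f y i j) x
    - ∑ s, (ΓE m f x s a i * RicE m f x s j + ΓE m f x s a j * RicE m f x i s)

/-- Covariant derivative of the curvature operator, `(∇_{∂_a} R)(∂_i,∂_j)∂_k` component `l`. -/
def covRopE (m : ℕ) (f : ℝ → ℝ) (x : Fin (m + 3) → ℝ) (a i j k l : Fin (m + 3)) : ℝ :=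
  pd a (fun y => RopE m f y i j k l) x
    + ∑ s, (ΓE m f x l a s * RopE m f x i j k s - ΓE m f x s a i * RopE m f x s j k l
      - ΓE m f x s a j * RopE m f x i s k l - ΓE m f x s a k * RopE m f x i j s l)

/-- The matrix of the curvature operator `R(u,v)` in the coordinate frame. -/
def RMatE (m : ℕ) (f : ℝ → ℝ) (x : Fin (m + 3) → ℝ) (u v : Fin (m + 3) → ℝ) :
    Matrix (Fin (m + 3)) (Fin (m + 3)) ℝ :=
  Matrix.of fun l k => ∑ i, ∑ j, u i * v j * RopE m f x i j k l

/-- The matrix of the Jacobi operator `J_u = R(u,·)u` in the coordinate frame. -/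
def JMatE (m : ℕ) (f : ℝ → ℝ) (x : Fin (m + 3) → ℝ) (u : Fin (m + 3) → ℝ) :
    Matrix (Fin (m + 3)) (Fin (m + 3)) ℝ :=
  Matrix.of fun l k => ∑ i, ∑ j, u i * u j * RopE m f x i k j l

/-- The matrix of the Szabó operator `S_u = (∇_u R)(u,·)u` in the coordinate frame. -/
def SMatE (m : ℕ) (f : ℝ → ℝ) (x : Fin (m + 3) → ℝ) (u : Fin (m + 3) → ℝ) :
    Matrix (Fin (m + 3)) (Fin (m + 3)) ℝ :=
  Matrix.of fun l k => ∑ a, ∑ i, ∑ j, u a * u i * u j * covRopE m f x a i k j l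

/-- The inner product of tangent vectors with respect to the Egorov metric. -/
def gdotE (m : ℕ) (f : ℝ → ℝ) (x : Fin (m + 3) → ℝ) (u v : Fin (m + 3) → ℝ) : ℝ :=
  ∑ i, ∑ j, gE m f x i j * u i * v j

/-- The scalar function `((f')² - 2 f f'')/(4 f²)`. -/
def cE (f : ℝ → ℝ) (t : ℝ) : ℝ :=
  ((deriv f t) ^ 2 - 2 * f t * deriv (deriv f) t) / (4 * (f t) ^ 2)

/-- The matrix of the Ricci operator: only nonzero entry at position `(n-1, n)`. -/
def QMatE (m : ℕ) (f : ℝ → ℝ) (x : Fin (m + 3) → ℝ) :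
    Matrix (Fin (m + 3)) (Fin (m + 3)) ℝ :=
  Matrix.of fun i j =>
    if i = penIdx m ∧ j = lastIdx m then ((m : ℝ) + 1) * cE f (x (lastIdx m)) else 0

-- AUX LEMMAS (to be inserted before the theorem)
@[simp] lemma lastIdx_val (m : ℕ) : ((lastIdx m : Fin (m+3)) : ℕ) = m + 2 := rfl
@[simp] lemma penIdx_val (m : ℕ) : ((penIdx m : Fin (m+3)) : ℕ) = m + 1 := rfl

/-- Christoffel symbol as a function of the last coordinate. -/
def Γt (m : ℕ) (f : ℝ → ℝ) (k i j : Fin (m + 3)) (t : ℝ) : ℝ :=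
  if (i : ℕ) < m + 1 ∧ j = i ∧ k = penIdx m then -(deriv f t / 2)
  else if (i : ℕ) < m + 1 ∧ j = lastIdx m ∧ k = i then
    deriv f t / (2 * f t)
  else if (j : ℕ) < m + 1 ∧ i = lastIdx m ∧ k = j then
    deriv f t / (2 * f t)
  else 0

lemma ΓE_eq_Γt (m : ℕ) (f : ℝ → ℝ) (x : Fin (m+3) → ℝ) (k i j : Fin (m+3)) :
    ΓE m f x k i j = Γt m f k i j (x (lastIdx m)) := rfl

def Af (f : ℝ → ℝ) (t : ℝ) : ℝ := deriv f t / (2 * f t)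

lemma pd_const0 {N : ℕ} (a : Fin N) (x : Fin N → ℝ) : pd a (fun _ => (0:ℝ)) x = 0 := by
  unfold pd; simp

lemma pd_comp_last (m : ℕ) (g : ℝ → ℝ) (a : Fin (m+3)) (x : Fin (m+3) → ℝ) :
    pd a (fun y => g (y (lastIdx m))) x
      = if a = lastIdx m then deriv g (x (lastIdx m)) else 0 := by
  unfold pd
  rcases eq_or_ne a (lastIdx m) with h | h
  · subst h; simp
  · rw [if_neg h]
    have : (fun t => g (Function.update x a t (lastIdx m))) = fun _ => g (x (lastIdx m)) := by
      funext t; rw [Function.update_of_ne (Ne.symm h)]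
    rw [this, deriv_const]

lemma ΓE_last (m : ℕ) (f : ℝ → ℝ) (x : Fin (m+3) → ℝ) (i j : Fin (m+3)) :
    ΓE m f x (lastIdx m) i j = 0 := by
  unfold ΓE
  split_ifs <;> first | rfl | ring1 | (exfalso; simp only [Fin.ext_iff, lastIdx_val, penIdx_val, and_true, true_and] at *; omega)

lemma prodc (m : ℕ) (f : ℝ → ℝ) (x : Fin (m+3) → ℝ) (k i s j : Fin (m+3)) :
    ΓE m f x k i s * ΓE m f x s k j =
      if (s : ℕ) < m + 1 ∧ k = s ∧ i = lastIdx m ∧ j = lastIdx m then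
        (Af f (x (lastIdx m)))^2 else 0 := by
  unfold ΓE Af
  split_ifs <;> first | rfl | ring1 | (exfalso; simp only [Fin.ext_iff, lastIdx_val, penIdx_val, and_true, true_and] at *; omega)

lemma prodd (m : ℕ) (f : ℝ → ℝ) (x : Fin (m+3) → ℝ) (k s i j : Fin (m+3)) :
    ΓE m f x k k s * ΓE m f x s i j = 0 := by
  unfold ΓE
  split_ifs <;> first | rfl | ring1 | (exfalso; simp only [Fin.ext_iff, lastIdx_val, penIdx_val, and_true, true_and] at *; omega)

lemma deriv_Γt_trace (m : ℕ) (f : ℝ → ℝ) (k j : Fin (m+3)) (t : ℝ) :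
    deriv (Γt m f k k j) t
      = if (k : ℕ) < m + 1 ∧ j = lastIdx m then deriv (Af f) t else 0 := by
  rcases Classical.em ((k : ℕ) < m + 1 ∧ j = lastIdx m) with h | h
  · rw [if_pos h]
    have : Γt m f k k j = Af f := by
      funext u; unfold Γt Af
      split_ifs <;> first | rfl | ring1 | (exfalso; simp only [Fin.ext_iff, lastIdx_val, penIdx_val, and_true, true_and] at *; omega)
    rw [this]
  · rw [if_neg h]
    have : Γt m f k k j = fun _ => 0 := by
      funext u; unfold Γt
      split_ifs <;> first | rfl | ring1 | (exfalso; simp only [Fin.ext_iff, lastIdx_val, penIdx_val, and_true, true_and] at *; omega)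
    rw [this, deriv_const]

lemma sum_ind (m : ℕ) (c : ℝ) :
    ∑ k : Fin (m+3), (if (k : ℕ) < m + 1 then c else 0) = ((m:ℝ)+1) * c := by
  rw [Fin.sum_univ_eq_sum_range (fun k => if k < m + 1 then c else 0)]
  rw [Finset.sum_ite, Finset.sum_const, Finset.sum_const_zero]
  have : (Finset.range (m+3)).filter (fun k => k < m + 1) = Finset.range (m+1) := by
    ext a; simp; omega
  rw [this, Finset.card_range, add_zero, nsmul_eq_mul]
  push_cast; ring


lemma Γt_last (m : ℕ) (f : ℝ → ℝ) (i j : Fin (m+3)) :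
    Γt m f (lastIdx m) i j = fun _ => (0:ℝ) := by
  funext u; unfold Γt
  split_ifs <;> first | rfl | ring1 | (exfalso; simp only [Fin.ext_iff, lastIdx_val, penIdx_val, and_true, true_and] at *; omega)

lemma smooth_chain {f : ℝ → ℝ} (hf : ContDiff ℝ (⊤ : ℕ∞) f) :
    Differentiable ℝ f ∧ Differentiable ℝ (deriv f) ∧ Differentiable ℝ (deriv (deriv f)) := by
  have h0 : ContDiff ℝ ((⊤:ℕ∞) : WithTop ℕ∞) f := hf.of_le (by simp)
  have h1 := (contDiff_infty_iff_deriv.mp h0).2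
  have h2 := (contDiff_infty_iff_deriv.mp h1).2
  have top1 : (1:WithTop ℕ∞) ≤ ((⊤:ℕ∞):WithTop ℕ∞) := by exact_mod_cast le_top
  exact ⟨h0.differentiable (zero_lt_one.trans_le top1).ne', h1.differentiable (zero_lt_one.trans_le top1).ne', h2.differentiable (zero_lt_one.trans_le top1).ne'⟩

lemma cE_key {f : ℝ → ℝ} (hf : ContDiff ℝ (⊤ : ℕ∞) f) (hfpos : ∀ t, 0 < f t) (t : ℝ) :
    -(deriv (Af f) t + (Af f t)^2) = cE f t := by
  obtain ⟨hd0, hd1, hd2⟩ := smooth_chain hf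
  have hA : Af f = fun u => deriv f u / (2 * f u) := rfl
  have hne : (2 : ℝ) * f t ≠ 0 := by
    have := (hfpos t); positivity
  have hdd : DifferentiableAt ℝ (fun u => 2 * f u) t := (hd0.const_mul 2) t
  have e : deriv (Af f) t
      = (deriv (deriv f) t * (2 * f t) - deriv f t * deriv (fun u => 2 * f u) t) / (2 * f t)^2 := by
    rw [hA]; exact deriv_div (hd1 t) hdd hne
  have e2 : deriv (fun u => 2 * f u) t = 2 * deriv f t := deriv_const_mul 2 (hd0 t)
  rw [e, e2, hA]
  unfold cE
  have hft : f t ≠ 0 := (hfpos t).ne'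
  field_simp
  ring

lemma diff_cE {f : ℝ → ℝ} (hf : ContDiff ℝ (⊤ : ℕ∞) f) (hfpos : ∀ t, 0 < f t) :
    Differentiable ℝ (cE f) := by
  obtain ⟨hd0, hd1, hd2⟩ := smooth_chain hf
  have hc : cE f = fun t => ((deriv f t)^2 - 2 * f t * deriv (deriv f) t) / (4 * (f t)^2) := rfl
  rw [hc]
  refine Differentiable.div ?_ ?_ ?_
  · exact (hd1.pow 2).sub ((hd0.const_mul 2).mul hd2)
  · exact (hd0.pow 2).const_mul 4
  · intro t; have := hfpos t; positivity

lemma ricE_eq (m : ℕ) (f : ℝ → ℝ) (hf : ContDiff ℝ (⊤ : ℕ∞) f) (hfpos : ∀ t, 0 < f t)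
    (x : Fin (m+3) → ℝ) (i j : Fin (m+3)) :
    RicE m f x i j = if i = lastIdx m ∧ j = lastIdx m then
      ((m:ℝ)+1) * cE f (x (lastIdx m)) else 0 := by
  have key : ∀ k : Fin (m+3), RopE m f x i k j k
      = -((if i = lastIdx m then
            (if (k:ℕ) < m+1 ∧ j = lastIdx m then deriv (Af f) (x (lastIdx m)) else 0) else 0)
          + (if (k:ℕ) < m+1 ∧ i = lastIdx m ∧ j = lastIdx m then
            (Af f (x (lastIdx m)))^2 else 0)) := by
    intro k
    unfold RopE
    have e3 : (∑ s, (ΓE m f x k i s * ΓE m f x s k j - ΓE m f x k k s * ΓE m f x s i j))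
        = if (k:ℕ) < m+1 ∧ i = lastIdx m ∧ j = lastIdx m then (Af f (x (lastIdx m)))^2 else 0 := by
      have e : ∀ s ∈ Finset.univ, (ΓE m f x k i s * ΓE m f x s k j - ΓE m f x k k s * ΓE m f x s i j)
          = if (s:ℕ) < m+1 ∧ k = s ∧ i = lastIdx m ∧ j = lastIdx m then
              (Af f (x (lastIdx m)))^2 else 0 := by
        intro s _; rw [prodc, prodd]; ring
      rw [Finset.sum_congr rfl e, Finset.sum_eq_single k]
      · split_ifs <;> first | rfl | (exfalso; simp only [Fin.ext_iff, lastIdx_val, penIdx_val, and_true, true_and] at *; omega)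
      · intro b _ hb; rw [if_neg]; rintro ⟨_, h2, _⟩; exact hb h2.symm
      · intro hk; exact absurd (Finset.mem_univ k) hk
    rw [e3]
    simp only [ΓE_eq_Γt m f]
    rw [pd_comp_last, pd_comp_last]
    have hk0 : (if k = lastIdx m then deriv (Γt m f k i j) (x (lastIdx m)) else 0) = 0 := by
      rcases eq_or_ne k (lastIdx m) with hk | hk
      · subst hk; rw [if_pos rfl, Γt_last, deriv_const]
      · rw [if_neg hk]
    rw [hk0, deriv_Γt_trace]
    ring
  unfold RicE
  rw [Finset.sum_congr rfl (fun k _ => key k)]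
  have e4 : ∀ k : Fin (m+3),
      -((if i = lastIdx m then
            (if (k:ℕ) < m+1 ∧ j = lastIdx m then deriv (Af f) (x (lastIdx m)) else 0) else 0)
          + (if (k:ℕ) < m+1 ∧ i = lastIdx m ∧ j = lastIdx m then
            (Af f (x (lastIdx m)))^2 else 0))
        = if (k:ℕ) < m+1 then
            (if i = lastIdx m ∧ j = lastIdx m then
              -(deriv (Af f) (x (lastIdx m)) + (Af f (x (lastIdx m)))^2) else 0) else 0 := by
    intro k
    split_ifs <;> first | ring1 | (exfalso; simp only [Fin.ext_iff, lastIdx_val, penIdx_val, and_true, true_and, not_and, not_lt] at *; omega)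
  rw [Finset.sum_congr rfl (fun k _ => e4 k), sum_ind, cE_key hf hfpos, mul_ite, mul_zero]


/-- every Egorov space has recurrent Ricci tensor. Concretely
`∇Ric = (n-2)·(((f')² - 2ff'')/(4f²))' dx_n ⊗ dx_n ⊗ dx_n`, and wherever `Ric ≠ 0` there
is a 1-form `ω` with `∇Ric = ω ⊗ Ric`. -/
theorem egorov_recurrent_ricci (m : ℕ) (f : ℝ → ℝ) (hf : ContDiff ℝ (⊤ : ℕ∞) f)
    (hfpos : ∀ t, 0 < f t) :
    (∀ (x : Fin (m + 3) → ℝ) (a i j : Fin (m + 3)),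
      covRicE m f x a i j =
        ((m : ℝ) + 1) * deriv (cE f) (x (lastIdx m)) *
          (if a = lastIdx m ∧ i = lastIdx m ∧ j = lastIdx m then 1 else 0)) ∧
    (∀ x : Fin (m + 3) → ℝ, RicE m f x (lastIdx m) (lastIdx m) ≠ 0 →
      ∃ ω : Fin (m + 3) → ℝ, ∀ a i j : Fin (m + 3),
        covRicE m f x a i j = ω a * RicE m f x i j) := by
  have part1 : ∀ (x : Fin (m + 3) → ℝ) (a i j : Fin (m + 3)),
      covRicE m f x a i j =
        ((m : ℝ) + 1) * deriv (cE f) (x (lastIdx m)) *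
          (if a = lastIdx m ∧ i = lastIdx m ∧ j = lastIdx m then 1 else 0) := by
    intro x a i j
    unfold covRicE
    have e1 : (fun y => RicE m f y i j)
        = fun y => (fun t => if i = lastIdx m ∧ j = lastIdx m then ((m:ℝ)+1) * cE f t else 0)
            (y (lastIdx m)) := by
      funext y; rw [ricE_eq m f hf hfpos y i j]
    have epd : pd a (fun y => RicE m f y i j) x
        = if a = lastIdx m then
            deriv (fun t => if i = lastIdx m ∧ j = lastIdx m then ((m:ℝ)+1) * cE f t else 0)
              (x (lastIdx m)) else 0 := by
      rw [e1]; exact pd_comp_last m (fun t => if i = lastIdx m ∧ j = lastIdx m then ((m:ℝ)+1) * cE f t else 0) a x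
    rw [epd]
    have e2 : deriv (fun t => if i = lastIdx m ∧ j = lastIdx m then ((m:ℝ)+1) * cE f t else 0)
        (x (lastIdx m))
        = if i = lastIdx m ∧ j = lastIdx m then
            ((m:ℝ)+1) * deriv (cE f) (x (lastIdx m)) else 0 := by
      rcases Classical.em (i = lastIdx m ∧ j = lastIdx m) with h | h
      · rw [if_pos h]
        have hg : (fun t => if i = lastIdx m ∧ j = lastIdx m then ((m:ℝ)+1) * cE f t else 0)
            = fun t => ((m:ℝ)+1) * cE f t := by
          funext t; rw [if_pos h]
        rw [hg, deriv_const_mul _ ((diff_cE hf hfpos) _)]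
      · rw [if_neg h]
        have hg : (fun t => if i = lastIdx m ∧ j = lastIdx m then ((m:ℝ)+1) * cE f t else 0)
            = fun _ => (0:ℝ) := by
          funext t; rw [if_neg h]
        rw [hg, deriv_const]
    rw [e2]
    have e3 : ∀ s ∈ Finset.univ, (ΓE m f x s a i * RicE m f x s j
        + ΓE m f x s a j * RicE m f x i s) = 0 := by
      intro s _
      rcases eq_or_ne s (lastIdx m) with hs | hs
      · subst hs; rw [ΓE_last, ΓE_last]; ring
      · rw [ricE_eq m f hf hfpos x s j, ricE_eq m f hf hfpos x i s,
          if_neg (fun h => hs h.1), if_neg (fun h => hs h.2)]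
        ring
    rw [Finset.sum_congr rfl e3, Finset.sum_const_zero, sub_zero]
    split_ifs <;> first | ring1 | (exfalso; simp only [Fin.ext_iff, lastIdx_val, penIdx_val, and_true, true_and, not_and, not_lt] at *; omega)
  refine ⟨part1, ?_⟩
  intro x hne
  have hval : RicE m f x (lastIdx m) (lastIdx m) = ((m:ℝ)+1) * cE f (x (lastIdx m)) := by
    rw [ricE_eq m f hf hfpos, if_pos ⟨rfl, rfl⟩]
  rw [hval] at hne
  refine ⟨fun a => if a = lastIdx m then
      ((m:ℝ)+1) * deriv (cE f) (x (lastIdx m)) / (((m:ℝ)+1) * cE f (x (lastIdx m))) else 0, ?_⟩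
  intro a i j
  rw [part1 x a i j, ricE_eq m f hf hfpos x i j]
  beta_reduce
  split_ifs <;>
    first
      | ring1
      | tauto
      | (rw [mul_one, div_mul_cancel₀ _ hne])
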